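/- For fixed i in the twisted ring group model of the compact g₂, the operator F₁² where F₁ = ad((1,0)gᵢ) is diagonalizable with eigenvalues 0 (on the 4-dimensional span of (1,0)gᵢ, (0,1)gᵢ, (3,−1)g_{i+1}, (3,1)g_{i+3}), −1 (on the span of (1,1)g_{i+1} and (1,−1)g_{i+3}), and −1/4 (on the 8-dimensional span of (1,0)gⱼ, (0,1)gⱼ for j = i+2, i+4, i+5, i+6). In particular (1,0)gᵢ is a semisimple (ad-diagonalizable over ℂ) element. -/

import Mathlib

noncomputable section

variable (K : Type*) [Field K]

/-- The 14-dimensional space `L = ⊕_{i=1}^{7} (K×K)·gᵢ` of the twisted ring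
group model, over a field `K` (`K = ℝ` gives the model of Theorem 1, `K = ℂ`
its complexification). -/
abbrev LK : Type _ := ZMod 7 → K × K

variable {K}

/-- `σ_{i,i+1}(r,r')`. -/
def σ1 (r r' : K × K) : K × K :=
  (((r.1 - 3*r.2) * r'.1 + 3*(r.1 + r.2) * r'.2) / 4,
   ((r.2 - 3*r.1) * r'.2 - (r.1 + r.2) * r'.1) / 4)

/-- `σ_{i,i+2}(r,r')`. -/
def σ2 (r r' : K × K) : K × K :=
  ((r.1 + 3*r.2) * (r'.1 - 3*r'.2) / 4,
   -((r.1 - r.2) * (r'.1 + r'.2)) / 4)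

/-- `σ_{i,i+4}(r,r')`. -/
def σ4 (r r' : K × K) : K × K :=
  (((r.1 - 3*r.2) * r'.1 - 3*(r.1 + r.2) * r'.2) / 4,
   ((r.1 - 3*r.2) * r'.1 + (r.1 + r.2) * r'.2) / 4)

/-- The bracket `[r·gᵢ, r'·gⱼ]` of homogeneous elements, extended
antisymmetrically. -/
def brTerm (i : ZMod 7) (r : K × K) (j : ZMod 7) (r' : K × K) : LK K :=
  if j = i + 1 then Pi.single (i + 3) (σ1 r r')
  else if j = i + 2 then Pi.single (i + 6) (σ2 r r')
  else if j = i + 4 then Pi.single (i + 5) (σ4 r r')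
  else if j = i + 3 then -Pi.single (i + 1) (σ4 r' r)
  else if j = i + 5 then -Pi.single (i + 4) (σ2 r' r)
  else if j = i + 6 then -Pi.single (i + 2) (σ1 r' r)
  else 0

/-- The bilinear bracket of the twisted ring group model. -/
def bracket (x y : LK K) : LK K :=
  ∑ i : ZMod 7, ∑ j : ZMod 7, brTerm i (x i) j (y j)

lemma brTerm_addr (i : ZMod 7) (r : K × K) (j : ZMod 7) (a b : K × K) :
    brTerm i r j (a + b) = brTerm i r j a + brTerm i r j b := by
  have h1r : σ1 r (a + b) = σ1 r a + σ1 r b := by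
    simp only [σ1, Prod.mk_add_mk, Prod.ext_iff, Prod.fst_add, Prod.snd_add]
    constructor <;> ring
  have h2r : σ2 r (a + b) = σ2 r a + σ2 r b := by
    simp only [σ2, Prod.mk_add_mk, Prod.ext_iff, Prod.fst_add, Prod.snd_add]
    constructor <;> ring
  have h4r : σ4 r (a + b) = σ4 r a + σ4 r b := by
    simp only [σ4, Prod.mk_add_mk, Prod.ext_iff, Prod.fst_add, Prod.snd_add]
    constructor <;> ring
  have h1l : σ1 (a + b) r = σ1 a r + σ1 b r := by
    simp only [σ1, Prod.mk_add_mk, Prod.ext_iff, Prod.fst_add, Prod.snd_add]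
    constructor <;> ring
  have h2l : σ2 (a + b) r = σ2 a r + σ2 b r := by
    simp only [σ2, Prod.mk_add_mk, Prod.ext_iff, Prod.fst_add, Prod.snd_add]
    constructor <;> ring
  have h4l : σ4 (a + b) r = σ4 a r + σ4 b r := by
    simp only [σ4, Prod.mk_add_mk, Prod.ext_iff, Prod.fst_add, Prod.snd_add]
    constructor <;> ring
  unfold brTerm
  split_ifs <;> simp [h1r, h2r, h4r, h1l, h2l, h4l, Pi.single_add] <;> abel

lemma brTerm_smulr (i : ZMod 7) (r : K × K) (j : ZMod 7) (c : K) (a : K × K) :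
    brTerm i r j (c • a) = c • brTerm i r j a := by
  have h1r : σ1 r (c • a) = c • σ1 r a := by
    simp only [σ1, Prod.smul_mk, Prod.ext_iff, Prod.smul_fst, Prod.smul_snd, smul_eq_mul]
    constructor <;> ring
  have h2r : σ2 r (c • a) = c • σ2 r a := by
    simp only [σ2, Prod.smul_mk, Prod.ext_iff, Prod.smul_fst, Prod.smul_snd, smul_eq_mul]
    constructor <;> ring
  have h4r : σ4 r (c • a) = c • σ4 r a := by
    simp only [σ4, Prod.smul_mk, Prod.ext_iff, Prod.smul_fst, Prod.smul_snd, smul_eq_mul]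
    constructor <;> ring
  have h1l : σ1 (c • a) r = c • σ1 a r := by
    simp only [σ1, Prod.smul_mk, Prod.ext_iff, Prod.smul_fst, Prod.smul_snd, smul_eq_mul]
    constructor <;> ring
  have h2l : σ2 (c • a) r = c • σ2 a r := by
    simp only [σ2, Prod.smul_mk, Prod.ext_iff, Prod.smul_fst, Prod.smul_snd, smul_eq_mul]
    constructor <;> ring
  have h4l : σ4 (c • a) r = c • σ4 a r := by
    simp only [σ4, Prod.smul_mk, Prod.ext_iff, Prod.smul_fst, Prod.smul_snd, smul_eq_mul]
    constructor <;> ring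
  unfold brTerm
  split_ifs <;> simp [h1r, h2r, h4r, h1l, h2l, h4l, Pi.single_smul]

/-- The adjoint operator `ad x = [x, ·]` as a linear endomorphism. -/
def ad (x : LK K) : Module.End K (LK K) where
  toFun := bracket x
  map_add' y z := by
    unfold bracket
    rw [← Finset.sum_add_distrib]
    refine Finset.sum_congr rfl fun i _ => ?_
    rw [← Finset.sum_add_distrib]
    exact Finset.sum_congr rfl fun j _ => by simpa using brTerm_addr i (x i) j (y j) (z j)
  map_smul' c y := by
    unfold bracket
    simp only [RingHom.id_apply, Finset.smul_sum]
    refine Finset.sum_congr rfl fun i _ => ?_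
    exact Finset.sum_congr rfl fun j _ => by simpa using brTerm_smulr i (x i) j c (y j)

variable (K)

/-- The basis element `(1,0)gᵢ`. -/
def X (i : ZMod 7) : LK K := Pi.single i (1, 0)
/-- The basis element `(0,1)gᵢ`. -/
def Y (i : ZMod 7) : LK K := Pi.single i (0, 1)

variable {K}

/-!
`F = ad ((1,0)gᵢ)` sends `g_{i+k}` to `g_{i+π k}` for the involution `π = (1 3)(2 6)(4 5)`
fixing `0`, and kills `gᵢ`. The products of the structure constants make `F² = -1/4` on
`g_{i+2}, g_{i+4}, g_{i+5}, g_{i+6}`, while on `g_{i+1}` and `g_{i+3}` the map `F` has rank one,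
with images spanned by `v = (1,-1)g_{i+3}` and `u = (1,1)g_{i+1}`, and `F u = v`, `F v = -u`.
So every homogeneous `w` has `F²(F² w) = μ F² w` with `μ ∈ {-1, -1/4}`, and
`w = (w - μ⁻¹ F² w) + μ⁻¹ F² w` splits into eigenvectors of `F²`. Over `ℂ`, `F³ w = c² F w`
with `c ∈ {i, i/2}`, and `w` splits into `w - c⁻² F² w ∈ ker F` and the `±c`-eigenvectors
`(F² w ± c F w) / 2c²`.
-/

namespace Module.End

variable {K V : Type*} [Field K] [AddCommGroup V] [Module K V] (f : Module.End K V) {v : V}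

theorem mem_iSup_eigenspace_of_apply_apply_eq_smul {μ : K} (hμ : μ ≠ 0)
    (h : f (f v) = μ • f v) : v ∈ ⨆ ν, f.eigenspace ν := by
  have h₀ : v - μ⁻¹ • f v ∈ f.eigenspace 0 := by
    rw [mem_eigenspace_iff, map_sub, map_smul, h, smul_smul, inv_mul_cancel₀ hμ]
    simp
  have hμ' : μ⁻¹ • f v ∈ f.eigenspace μ := by
    rw [mem_eigenspace_iff, map_smul, h, smul_comm]
  simpa using Submodule.add_mem _ (Submodule.mem_iSup_of_mem 0 h₀)
    (Submodule.mem_iSup_of_mem μ hμ')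

theorem mem_iSup_eigenspace_of_apply_apply_eq_sq_smul [NeZero (2 : K)] {c : K} (hc : c ≠ 0)
    (h : f (f v) = c ^ 2 • v) : v ∈ ⨆ ν, f.eigenspace ν := by
  have hplus : f v + c • v ∈ f.eigenspace c := by
    rw [mem_eigenspace_iff, map_add, map_smul, h]
    module
  have hminus : f v - c • v ∈ f.eigenspace (-c) := by
    rw [mem_eigenspace_iff, map_sub, map_smul, h]
    module
  have hv : v = (2 * c)⁻¹ • ((f v + c • v) - (f v - c • v)) := by
    rw [show (f v + c • v) - (f v - c • v) = (2 * c) • v by module, smul_smul,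
      inv_mul_cancel₀ (mul_ne_zero two_ne_zero hc), one_smul]
  rw [hv]
  exact Submodule.smul_mem _ _ (Submodule.sub_mem _
    (Submodule.mem_iSup_of_mem c hplus) (Submodule.mem_iSup_of_mem (-c) hminus))

theorem mem_iSup_eigenspace_of_apply_apply_apply_eq_sq_smul [NeZero (2 : K)] {c : K}
    (hc : c ≠ 0) (h : f (f (f v)) = c ^ 2 • f v) : v ∈ ⨆ ν, f.eigenspace ν := by
  have hc2 : c ^ 2 ≠ 0 := pow_ne_zero 2 hc
  have h₀ : v - (c ^ 2)⁻¹ • f (f v) ∈ f.eigenspace 0 := by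
    rw [mem_eigenspace_iff, map_sub, map_smul, h, smul_smul, inv_mul_cancel₀ hc2]
    simp
  have hw : f (f (f (f v))) = c ^ 2 • f (f v) := by rw [h, map_smul]
  rw [← sub_add_cancel v ((c ^ 2)⁻¹ • f (f v))]
  exact Submodule.add_mem _ (Submodule.mem_iSup_of_mem 0 h₀)
    (Submodule.smul_mem _ (c ^ 2)⁻¹ (mem_iSup_eigenspace_of_apply_apply_eq_sq_smul f hc hw))

end Module.End

theorem Submodule.eq_top_of_single_mem {R ι : Type*} {M : ι → Type*} [Semiring R]
    [∀ i, AddCommMonoid (M i)] [∀ i, Module R (M i)] [DecidableEq ι] [Finite ι]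
    {p : Submodule R (∀ i, M i)} (h : ∀ i m, Pi.single i m ∈ p) : p = ⊤ :=
  eq_top_iff.2 <| (LinearMap.iSup_range_single (R := R) (φ := M)).ge.trans <|
    iSup_le fun i => by
      rintro _ ⟨m, rfl⟩
      exact h i m

lemma brTerm_zero_left (i j : ZMod 7) (r : K × K) : brTerm i 0 j r = 0 := by
  unfold brTerm
  split_ifs <;> simp [σ1, σ2, σ4]

lemma brTerm_zero_right (i j : ZMod 7) (r : K × K) : brTerm i r j 0 = 0 := by
  simpa using brTerm_smulr i r j 0 0

lemma ad_single_single (i j : ZMod 7) (a r : K × K) :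
    ad (Pi.single i a : LK K) (Pi.single j r) = brTerm i a j r := by
  simp only [ad, LinearMap.coe_mk, AddHom.coe_mk, bracket]
  rw [Fintype.sum_eq_single i fun k hk => ?_, Fintype.sum_eq_single j fun k hk => ?_]
  · simp
  · simp [Pi.single_eq_of_ne hk, brTerm_zero_right]
  · simp [Pi.single_eq_of_ne hk, brTerm_zero_left]

section ad_X

variable (i : ZMod 7) (r : K × K)

lemma ad_X_single_self : ad (X K i) (Pi.single i r) = 0 := by
  rw [X, ad_single_single, brTerm]
  simp +decide only [left_eq_add, if_false]

lemma ad_X_single_add_one :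
    ad (X K i) (Pi.single (i + 1) r) = ((r.1 + 3 * r.2) / 4) • Pi.single (i + 3) (1, -1) := by
  rw [X, ad_single_single, brTerm, if_pos rfl, ← Pi.single_smul']
  congr 1
  simp only [σ1, Prod.smul_mk, smul_eq_mul, Prod.mk.injEq]
  constructor <;> ring

lemma ad_X_single_add_two :
    ad (X K i) (Pi.single (i + 2) r) =
      Pi.single (i + 6) ((r.1 - 3 * r.2) / 4, -((r.1 + r.2) / 4)) := by
  rw [X, ad_single_single, brTerm]
  simp +decide only [add_right_inj, if_false, if_true]
  congr 1
  simp only [σ2, Prod.mk.injEq]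
  constructor <;> ring

lemma ad_X_single_add_three :
    ad (X K i) (Pi.single (i + 3) r) = -((r.1 - 3 * r.2) / 4) • Pi.single (i + 1) (1, 1) := by
  rw [X, ad_single_single, brTerm, ← Pi.single_smul']
  simp +decide only [add_right_inj, if_false, if_true, ← Pi.single_neg]
  congr 1
  simp only [σ4, Prod.neg_mk, Prod.smul_mk, smul_eq_mul, Prod.mk.injEq]
  constructor <;> ring

lemma ad_X_single_add_four :
    ad (X K i) (Pi.single (i + 4) r) =
      Pi.single (i + 5) ((r.1 - 3 * r.2) / 4, (r.1 + r.2) / 4) := by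
  rw [X, ad_single_single, brTerm]
  simp +decide only [add_right_inj, if_false, if_true]
  congr 1
  simp only [σ4, Prod.mk.injEq]
  constructor <;> ring

lemma ad_X_single_add_five :
    ad (X K i) (Pi.single (i + 5) r) =
      Pi.single (i + 4) (-((r.1 + 3 * r.2) / 4), (r.1 - r.2) / 4) := by
  rw [X, ad_single_single, brTerm]
  simp +decide only [add_right_inj, if_false, if_true, ← Pi.single_neg]
  congr 1
  simp only [σ2, Prod.neg_mk, Prod.mk.injEq]
  constructor <;> ring

lemma ad_X_single_add_six :
    ad (X K i) (Pi.single (i + 6) r) =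
      Pi.single (i + 2) (-((r.1 - 3 * r.2) / 4), (r.1 + r.2) / 4) := by
  rw [X, ad_single_single, brTerm]
  simp +decide only [add_right_inj, if_false, if_true, ← Pi.single_neg]
  congr 1
  simp only [σ1, Prod.neg_mk, Prod.mk.injEq]
  constructor <;> ring

end ad_X

section ad_X_sq

variable [NeZero (2 : K)] (i : ZMod 7)

lemma four_ne_zero_of_two : (4 : K) ≠ 0 := by
  rw [show (4 : K) = 2 * 2 by norm_num]
  exact mul_ne_zero two_ne_zero two_ne_zero

lemma ad_X_single_add_one_one_one :
    ad (X K i) (Pi.single (i + 1) (1, 1)) = Pi.single (i + 3) (1, -1) := by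
  rw [ad_X_single_add_one]
  norm_num [four_ne_zero_of_two]

lemma ad_X_single_add_three_one_neg_one :
    ad (X K i) (Pi.single (i + 3) (1, -1)) = -Pi.single (i + 1) (1, 1) := by
  rw [ad_X_single_add_three]
  norm_num [four_ne_zero_of_two]

variable (r : K × K)

lemma ad_X_ad_X_single_add_one :
    ad (X K i) (ad (X K i) (Pi.single (i + 1) r)) =
      -((r.1 + 3 * r.2) / 4) • Pi.single (i + 1) (1, 1) := by
  rw [ad_X_single_add_one, map_smul, ad_X_single_add_three_one_neg_one, smul_neg, neg_smul]

lemma ad_X_ad_X_single_add_three :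
    ad (X K i) (ad (X K i) (Pi.single (i + 3) r)) =
      -((r.1 - 3 * r.2) / 4) • Pi.single (i + 3) (1, -1) := by
  rw [ad_X_single_add_three, map_smul, ad_X_single_add_one_one_one]

lemma ad_X_ad_X_single_of_mem {k : ZMod 7} (hk : k = 2 ∨ k = 4 ∨ k = 5 ∨ k = 6) :
    ad (X K i) (ad (X K i) (Pi.single (i + k) r)) = -(1 / 4 : K) • Pi.single (i + k) r := by
  rw [← Pi.single_smul']
  rcases hk with rfl | rfl | rfl | rfl <;>
  · simp only [ad_X_single_add_two, ad_X_single_add_four, ad_X_single_add_five,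
      ad_X_single_add_six]
    congr 1
    have h4 := four_ne_zero_of_two (K := K)
    ext <;> simp only [Prod.smul_fst, Prod.smul_snd, smul_eq_mul] <;> field_simp <;> ring

end ad_X_sq

lemma ZMod.seven_cases (k : ZMod 7) :
    k = 0 ∨ k = 1 ∨ k = 3 ∨ (k = 2 ∨ k = 4 ∨ k = 5 ∨ k = 6) := by
  revert k
  decide

section diagonalizable

variable [NeZero (2 : K)] (i : ZMod 7)

lemma single_mem_iSup_eigenspace_ad_X_comp_ad_X (j : ZMod 7) (r : K × K) :
    (Pi.single j r : LK K) ∈ ⨆ μ, Module.End.eigenspace (ad (X K i) ∘ₗ ad (X K i)) μ := by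
  obtain ⟨k, rfl⟩ : ∃ k, j = i + k := ⟨j - i, by ring⟩
  rcases ZMod.seven_cases k with rfl | rfl | rfl | hk
  · refine Module.End.mem_iSup_eigenspace_of_apply_apply_eq_smul _ one_ne_zero ?_
    simp [ad_X_single_self]
  · refine Module.End.mem_iSup_eigenspace_of_apply_apply_eq_smul _ (neg_ne_zero.2 one_ne_zero) ?_
    simp only [LinearMap.comp_apply, ad_X_ad_X_single_add_one, map_smul,
      ad_X_single_add_one_one_one, ad_X_single_add_three_one_neg_one]
    module
  · refine Module.End.mem_iSup_eigenspace_of_apply_apply_eq_smul _ (neg_ne_zero.2 one_ne_zero) ?_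
    simp only [LinearMap.comp_apply, ad_X_ad_X_single_add_three, map_smul, map_neg,
      ad_X_single_add_one_one_one, ad_X_single_add_three_one_neg_one]
    module
  · refine Module.End.mem_iSup_eigenspace_of_apply_apply_eq_smul _
      (neg_ne_zero.2 (one_div_ne_zero four_ne_zero_of_two)) ?_
    simp only [LinearMap.comp_apply, ad_X_ad_X_single_of_mem i _ hk, map_smul]

lemma single_mem_iSup_eigenspace_ad_X {ι : K} (hι : ι * ι = -1) (j : ZMod 7) (r : K × K) :
    (Pi.single j r : LK K) ∈ ⨆ μ, Module.End.eigenspace (ad (X K i)) μ := by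
  have hι₀ : ι ≠ 0 := by
    rintro rfl
    simp at hι
  obtain ⟨k, rfl⟩ : ∃ k, j = i + k := ⟨j - i, by ring⟩
  rcases ZMod.seven_cases k with rfl | rfl | rfl | hk
  · refine Module.End.mem_iSup_eigenspace_of_apply_apply_apply_eq_sq_smul _ hι₀ ?_
    simp [ad_X_single_self]
  · refine Module.End.mem_iSup_eigenspace_of_apply_apply_apply_eq_sq_smul _ hι₀ ?_
    rw [ad_X_ad_X_single_add_one, map_smul, ad_X_single_add_one_one_one, ad_X_single_add_one,
      sq, hι]
    module
  · refine Module.End.mem_iSup_eigenspace_of_apply_apply_apply_eq_sq_smul _ hι₀ ?_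
    rw [ad_X_ad_X_single_add_three, map_smul, ad_X_single_add_three_one_neg_one,
      ad_X_single_add_three, sq, hι]
    module
  · refine Module.End.mem_iSup_eigenspace_of_apply_apply_apply_eq_sq_smul _
      (div_ne_zero hι₀ two_ne_zero) ?_
    rw [ad_X_ad_X_single_of_mem i _ hk, map_smul, div_pow, sq, hι]
    congr 1
    ring

theorem iSup_eigenspace_ad_X_comp_ad_X_eq_top :
    ⨆ μ, Module.End.eigenspace (ad (X K i) ∘ₗ ad (X K i)) μ = ⊤ :=
  Submodule.eq_top_of_single_mem (single_mem_iSup_eigenspace_ad_X_comp_ad_X i)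

theorem iSup_eigenspace_ad_X_eq_top {ι : K} (hι : ι * ι = -1) :
    ⨆ μ, Module.End.eigenspace (ad (X K i)) μ = ⊤ :=
  Submodule.eq_top_of_single_mem (single_mem_iSup_eigenspace_ad_X i hι)

end diagonalizable

/-- in the twisted ring group model of the compact `g₂`, for each
`i` the operator `F₁²` (with `F₁ = ad((1,0)gᵢ)`) is diagonalizable with
eigenvalue `0` on `(1,0)gᵢ, (0,1)gᵢ, (3,−1)g_{i+1}, (3,1)g_{i+3}`,
eigenvalue `−1` on `(1,1)g_{i+1}, (1,−1)g_{i+3}`, and eigenvalue `−1/4` on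
`(1,0)gⱼ, (0,1)gⱼ` for `j = i+2, i+4, i+5, i+6`; in particular `(1,0)gᵢ` is a
semisimple element: its adjoint operator is diagonalizable over `ℂ`. -/
theorem stmt17 : ∀ i : ZMod 7,
    (ad (X ℝ i)) ((ad (X ℝ i)) (X ℝ i)) = 0 ∧
    (ad (X ℝ i)) ((ad (X ℝ i)) (Y ℝ i)) = 0 ∧
    (ad (X ℝ i)) ((ad (X ℝ i)) (Pi.single (i + 1) ((3 : ℝ), (-1 : ℝ)))) = 0 ∧
    (ad (X ℝ i)) ((ad (X ℝ i)) (Pi.single (i + 3) ((3 : ℝ), (1 : ℝ)))) = 0 ∧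
    (ad (X ℝ i)) ((ad (X ℝ i)) (Pi.single (i + 1) ((1 : ℝ), (1 : ℝ)))) =
      -Pi.single (i + 1) ((1 : ℝ), (1 : ℝ)) ∧
    (ad (X ℝ i)) ((ad (X ℝ i)) (Pi.single (i + 3) ((1 : ℝ), (-1 : ℝ)))) =
      -Pi.single (i + 3) ((1 : ℝ), (-1 : ℝ)) ∧
    (∀ j : ZMod 7, j = i + 2 ∨ j = i + 4 ∨ j = i + 5 ∨ j = i + 6 →
      (ad (X ℝ i)) ((ad (X ℝ i)) (X ℝ j)) = (-(1/4) : ℝ) • X ℝ j ∧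
      (ad (X ℝ i)) ((ad (X ℝ i)) (Y ℝ j)) = (-(1/4) : ℝ) • Y ℝ j) ∧
    (⨆ μ : ℝ, Module.End.eigenspace (ad (X ℝ i) ∘ₗ ad (X ℝ i)) μ) = ⊤ ∧
    (⨆ μ : ℂ, Module.End.eigenspace (ad (X ℂ i)) μ) = ⊤ := by
  intro i
  refine ⟨(congrArg (ad (X ℝ i)) (ad_X_single_self i (1, 0))).trans (map_zero _),
    (congrArg (ad (X ℝ i)) (ad_X_single_self i (0, 1))).trans (map_zero _),
    by norm_num [ad_X_ad_X_single_add_one], by norm_num [ad_X_ad_X_single_add_three],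
    by rw [ad_X_single_add_one_one_one, ad_X_single_add_three_one_neg_one],
    by rw [ad_X_single_add_three_one_neg_one, map_neg, ad_X_single_add_one_one_one], ?_,
    iSup_eigenspace_ad_X_comp_ad_X_eq_top i, iSup_eigenspace_ad_X_eq_top i Complex.I_mul_I⟩
  rintro _ (rfl | rfl | rfl | rfl) <;>
    exact ⟨ad_X_ad_X_single_of_mem i _ (by decide), ad_X_ad_X_single_of_mem i _ (by decide)⟩

end
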